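/- arXiv:math/0504443 — 5 statements merged into one kernel-verified Lean document; each statement's English description precedes it below -/
import Mathlib

section
/- Let $\bar{k}$ be an algebraically closed field of characteristic $p > 0$ with a power-of-$p$ Frobenius $\sigma: x \mapsto x^q$, extended to $\mathfrak{o} = \bar{k}[[\epsilon]]$ coefficientwise. For non-negative integers $a, b$, the additive group homomorphism $f: \mathfrak{o} \to \mathfrak{o}$ defined by $f(x) = \epsilon^a \sigma(x) - \epsilon^b x$ has image exactly $\epsilon^c \mathfrak{o}$, where $c = \min\{a, b\}$. -/
open PowerSeries

lemma exists_sol (K : Type*) [Field K] [IsAlgClosed K] (q : ℕ) (hq : 2 ≤ q) (t c : K) :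
    ∃ r : K, r ^ q = t * r + c := by
  have hdeg : (Polynomial.C t * Polynomial.X + Polynomial.C c : Polynomial K).degree <
      (Polynomial.X ^ q : Polynomial K).degree := by
    rw [Polynomial.degree_X_pow]
    refine lt_of_le_of_lt (Polynomial.degree_add_le _ _) ?_
    rw [max_lt_iff]
    constructor
    · exact lt_of_le_of_lt (Polynomial.degree_C_mul_X_le t) (by exact_mod_cast by omega)
    · exact lt_of_le_of_lt Polynomial.degree_C_le (by exact_mod_cast by positivity)
  obtain ⟨r, hr⟩ := IsAlgClosed.exists_root
      (Polynomial.X ^ q - (Polynomial.C t * Polynomial.X + Polynomial.C c)) (by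
    rw [Polynomial.degree_sub_eq_left_of_degree_lt hdeg, Polynomial.degree_X_pow]
    exact_mod_cast by omega)
  refine ⟨r, ?_⟩
  have := hr
  simp only [Polynomial.IsRoot, Polynomial.eval_sub, Polynomial.eval_add, Polynomial.eval_mul,
    Polynomial.eval_pow, Polynomial.eval_X, Polynomial.eval_C] at this
  exact sub_eq_zero.mp this

noncomputable def mkSol (K : Type*) [Field K] [IsAlgClosed K] (q : ℕ) (hq : 2 ≤ q)
    (d : ℕ) (z : ℕ → K) : ℕ → K
  | n =>
    (exists_sol K q hq (if d = 0 then 1 else 0)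
      ((if h : 0 < d ∧ d ≤ n then mkSol K q hq d z (n - d) else 0) + z n)).choose
  decreasing_by all_goals (obtain ⟨h1, h2⟩ := h; omega)

lemma mkSol_spec (K : Type*) [Field K] [IsAlgClosed K] (q : ℕ) (hq : 2 ≤ q)
    (d : ℕ) (z : ℕ → K) (n : ℕ) :
    (mkSol K q hq d z n) ^ q =
      (if d = 0 then 1 else 0) * mkSol K q hq d z n +
        ((if h : 0 < d ∧ d ≤ n then mkSol K q hq d z (n - d) else 0) + z n) := by
  rw [mkSol]
  exact (exists_sol K q hq _ _).choose_spec

noncomputable def mkSol2 (K : Type*) [Field K] (q d : ℕ) (hd : 0 < d) (z : ℕ → K) : ℕ → K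
  | n => (if h : d ≤ n then (mkSol2 K q d hd z (n - d)) ^ q else 0) - z n
  decreasing_by all_goals omega

lemma mkSol2_spec (K : Type*) [Field K] (q d : ℕ) (hd : 0 < d) (z : ℕ → K) (n : ℕ) :
    mkSol2 K q d hd z n
      = (if h : d ≤ n then (mkSol2 K q d hd z (n - d)) ^ q else 0) - z n := by
  rw [mkSol2]

/-- Lemma 2.10 ("warm-up exercise"): over `𝔬 = K⟦ε⟧` with `K` algebraically closed of
characteristic `p` and `σ` the `q`-power Frobenius applied coefficientwise, the additive map
`f(x) = ε^a σ(x) - ε^b x` has image exactly `ε^(min a b) · 𝔬`. -/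
theorem image_of_frobenius_twisted_map
    (p q m : ℕ) (hp : p.Prime) (hq : q = p ^ m) (hm : 1 ≤ m)
    (K : Type*) [Field K] [IsAlgClosed K] [CharP K p]
    (σ : K →+* K) (hσ : ∀ x : K, σ x = x ^ q)
    (a b : ℕ) :
    Set.range (fun x : PowerSeries K =>
        X ^ a * PowerSeries.map σ x - X ^ b * x)
      = {y : PowerSeries K | X ^ (min a b) ∣ y} := by
  have hq2 : 2 ≤ q := by
    have := hp.two_le
    calc 2 ≤ p := this
    _ = p ^ 1 := (pow_one p).symm
    _ ≤ p ^ m := Nat.pow_le_pow_right (by omega) hm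
    _ = q := hq.symm
  ext y
  simp only [Set.mem_range, Set.mem_setOf_eq]
  constructor
  · rintro ⟨x, rfl⟩
    exact dvd_sub
      (Dvd.dvd.mul_right (pow_dvd_pow X (min_le_left a b)) _)
      (Dvd.dvd.mul_right (pow_dvd_pow X (min_le_right a b)) _)
  · rintro ⟨z, rfl⟩
    rcases le_or_gt a b with hab | hab
    · -- a ≤ b, c = a, d = b - a
      set d := b - a with hd
      refine ⟨PowerSeries.mk (mkSol K q hq2 d (fun j => coeff j z)), ?_⟩
      have hmin : min a b = a := min_eq_left hab
      rw [hmin]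
      ext n
      simp only [map_sub, coeff_X_pow_mul', coeff_map, coeff_mk]
      rcases le_or_gt a n with han | han
      · rw [if_pos han, if_pos han, hσ, mkSol_spec]
        rcases Nat.eq_zero_or_pos d with hd0 | hd0
        · have hba : b = a := by omega
          rw [if_pos hd0, dif_neg (by omega), if_pos (hba ▸ han)]
          have : n - b = n - a := by omega
          rw [this]
          ring
        · rw [if_neg (by omega)]
          rcases le_or_gt b n with hbn | hbn
          · rw [dif_pos ⟨hd0, by omega⟩, if_pos hbn]
            have : n - a - d = n - b := by omega
            rw [this]
            ring
          · rw [dif_neg (by omega), if_neg (by omega)]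
            ring
      · rw [if_neg (by omega), if_neg (by omega), if_neg (by omega)]
        ring
    · -- b < a, c = b, d = a - b ≥ 1
      set d := a - b with hd
      have hd0 : 0 < d := by omega
      refine ⟨PowerSeries.mk (mkSol2 K q d hd0 (fun j => coeff j z)), ?_⟩
      have hmin : min a b = b := min_eq_right (le_of_lt hab)
      rw [hmin]
      ext n
      simp only [map_sub, coeff_X_pow_mul', coeff_map, coeff_mk]
      rcases le_or_gt b n with hbn | hbn
      · rw [if_pos hbn, if_pos hbn, mkSol2_spec K q d hd0 _ (n - b)]
        rcases le_or_gt a n with han | han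
        · rw [dif_pos (show d ≤ n - b by omega), if_pos han, hσ]
          have : n - b - d = n - a := by omega
          rw [this]
          ring
        · rw [dif_neg (by omega), if_neg (by omega)]
          ring
      · rw [if_neg (by omega), if_neg (by omega), if_neg (by omega)]
        ring
end

section
/- With $\sigma$ the Frobenius of $\bar{k}[[\epsilon]]$ over $k[[\epsilon]]$, the map $f: \bar{k}[[\epsilon]] \to \bar{k}[[\epsilon]]$, $f(x) = \sigma(x) - x$, is surjective and its kernel is $k[[\epsilon]]$ (equivalently, after inverting $\epsilon$: $x \mapsto \sigma(x) - x$ is surjective on $\bar{k}((\epsilon))$ with kernel $k((\epsilon))$). -/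
open PowerSeries

lemma artin_schreier_root (p q m : ℕ) (hp : p.Prime) (hq : q = p ^ m) (hm : 1 ≤ m)
    (K : Type*) [Field K] [IsAlgClosed K] (c : K) : ∃ a : K, a ^ q - a = c := by
  have hq2 : 2 ≤ q := by
    calc 2 ≤ p := hp.two_le
    _ = p ^ 1 := (pow_one p).symm
    _ ≤ p ^ m := Nat.pow_le_pow_right hp.pos hm
    _ = q := hq.symm
  set f : Polynomial K := Polynomial.X ^ q - (Polynomial.X + Polynomial.C c) with hf
  have hdeg : f.degree = q := by
    rw [hf]
    rw [Polynomial.degree_sub_eq_left_of_degree_lt]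
    · exact Polynomial.degree_X_pow q
    · rw [Polynomial.degree_X_pow]
      calc (Polynomial.X + Polynomial.C c).degree ≤ 1 := by
            apply le_trans (Polynomial.degree_add_le _ _)
            simp [Polynomial.degree_X]; exact le_trans Polynomial.degree_C_le (by norm_num)
        _ < (q : WithBot ℕ) := by exact_mod_cast hq2
  obtain ⟨a, ha⟩ := IsAlgClosed.exists_root f (by rw [hdeg]; exact_mod_cast (by omega : q ≠ 0))
  refine ⟨a, ?_⟩
  have := ha
  simp only [hf, Polynomial.IsRoot, Polynomial.eval_sub, Polynomial.eval_pow,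
    Polynomial.eval_X, Polynomial.eval_add, Polynomial.eval_C] at this
  linear_combination this

/-- With `σ` the coefficientwise `q`-power Frobenius of `K⟦ε⟧` (where `K = k̄` is an algebraic
closure of the field `k` with `q` elements), the map `f(x) = σ(x) - x` is surjective, and its
kernel is `k⟦ε⟧`, i.e. the set of power series all of whose coefficients are fixed by the
`q`-power Frobenius of `K`. -/
theorem artin_schreier_on_power_series
    (p q m : ℕ) (hp : p.Prime) (hq : q = p ^ m) (hm : 1 ≤ m)
    (K : Type*) [Field K] [IsAlgClosed K] [CharP K p]
    (σ : K →+* K) (hσ : ∀ x : K, σ x = x ^ q) :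
    Function.Surjective (fun x : PowerSeries K => PowerSeries.map σ x - x) ∧
      (∀ x : PowerSeries K,
        PowerSeries.map σ x - x = 0 ↔ ∀ n : ℕ, σ (coeff n x) = coeff n x) := by
  constructor
  · intro y
    choose a ha using fun n => artin_schreier_root p q m hp hq hm K (coeff n y)
    refine ⟨PowerSeries.mk a, ?_⟩
    ext n
    simp [coeff_map, hσ, ha n]
  · intro x
    constructor
    · intro h n
      have := congrArg (coeff n) h
      simpa [coeff_map, sub_eq_zero] using this
    · intro h
      ext n
      simp [coeff_map, sub_eq_zero, h n]
end

section
/- Let $\Phi$ be a reduced root system with Weyl group $W$, positive roots $\Phi^+$, and half-sum of positive roots $\rho$. For any element $\nu$ of the coweight space $\mathfrak{a} = X_*(A) \otimes \mathbb{R}$, letting $\nu_{\mathrm{dom}}$ denote the unique dominant element in the $W$-orbit of $\nu$, one has $\langle \rho, \nu - \nu_{\mathrm{dom}} \rangle = \sum_{\alpha > 0} \min\{\langle \alpha, \nu \rangle, 0\}$. -/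
open Finset

/-- Lemma 2.12: for a reduced root system with positive roots `Φ` (viewed as linear functionals
on the coweight space `V`), Weyl group `W` (acting on `V` and permuting the roots up to sign),
and `ρ` the half-sum of positive roots, one has
`⟨ρ, ν - ν_dom⟩ = ∑_{α > 0} min {⟨α, ν⟩, 0}` for any `ν ∈ V`, where `ν_dom` is the dominant
element in the `W`-orbit of `ν`. -/
theorem pairing_rho_sub_dominant
    (V : Type*) [AddCommGroup V] [Module ℝ V]
    (Φ : Finset (Module.Dual ℝ V))          -- the positive roots
    (W : Subgroup (V ≃ₗ[ℝ] V))              -- the Weyl group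
    (hne : ∀ α ∈ Φ, α ≠ 0)
    (hdisj : ∀ α ∈ Φ, -α ∉ Φ)
    -- each `w ∈ W` permutes the set of roots `Φ ∪ (-Φ)`
    (hW : ∀ w ∈ W, ∀ α ∈ Φ,
      α.comp (w : V ≃ₗ[ℝ] V).toLinearMap ∈ Φ ∨ -(α.comp (w : V ≃ₗ[ℝ] V).toLinearMap) ∈ Φ)
    (ν νdom : V) (w : V ≃ₗ[ℝ] V) (hw : w ∈ W) (hνdom : νdom = w ν)
    (hdom : ∀ α ∈ Φ, 0 ≤ α νdom) :
    (∑ α ∈ Φ, α (ν - νdom)) / 2 = ∑ α ∈ Φ, min (α ν) 0 := by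
  classical
  have hwinv : w⁻¹ ∈ W := inv_mem hw
  -- composition identities
  have hcomp1 : ∀ γ : Module.Dual ℝ V,
      (γ.comp w.toLinearMap).comp w.symm.toLinearMap = γ := by
    intro γ; ext x; simp
  have hcomp2 : ∀ γ : Module.Dual ℝ V,
      (γ.comp w.symm.toLinearMap).comp w.toLinearMap = γ := by
    intro γ; ext x; simp
  set g : Module.Dual ℝ V → Module.Dual ℝ V := fun α =>
    if α.comp w.toLinearMap ∈ Φ then α.comp w.toLinearMap else -(α.comp w.toLinearMap) with hg
  set g' : Module.Dual ℝ V → Module.Dual ℝ V := fun β =>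
    if β.comp w.symm.toLinearMap ∈ Φ then β.comp w.symm.toLinearMap
      else -(β.comp w.symm.toLinearMap) with hg'
  have hgmem : ∀ α ∈ Φ, g α ∈ Φ := by
    intro α hα
    simp only [hg]
    split_ifs with h
    · exact h
    · rcases hW w hw α hα with h' | h'
      · exact absurd h' h
      · exact h'
  have hg'mem : ∀ β ∈ Φ, g' β ∈ Φ := by
    intro β hβ
    simp only [hg']
    split_ifs with h
    · exact h
    · rcases hW w⁻¹ hwinv β hβ with h' | h'
      · exact absurd h' h
      · exact h'
  have hleft : ∀ α ∈ Φ, g' (g α) = α := by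
    intro α hα
    by_cases h : α.comp w.toLinearMap ∈ Φ
    · simp only [hg, hg', if_pos h, hcomp1, if_pos hα]
    · simp only [hg, hg', if_neg h, LinearMap.neg_comp, hcomp1,
        if_neg (hdisj α hα), neg_neg]
  have hright : ∀ β ∈ Φ, g (g' β) = β := by
    intro β hβ
    by_cases h : β.comp w.symm.toLinearMap ∈ Φ
    · simp only [hg, hg', if_pos h, hcomp2, if_pos hβ]
    · simp only [hg, hg', if_neg h, LinearMap.neg_comp, hcomp2,
        if_neg (hdisj β hβ), neg_neg]
  have hterm : ∀ α ∈ Φ, α (w ν) = |(g α) ν| := by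
    intro α hα
    have h0 : 0 ≤ α (w ν) := by rw [← hνdom]; exact hdom α hα
    by_cases h : α.comp w.toLinearMap ∈ Φ
    · simp only [hg, if_pos h]; simp [abs_of_nonneg h0]
    · simp only [hg, if_neg h]; simp [abs_of_nonneg h0]
  have hsum : ∑ α ∈ Φ, α (w ν) = ∑ β ∈ Φ, |β ν| := by
    refine Finset.sum_nbij' g g' hgmem hg'mem hleft hright ?_
    intro α hα
    exact hterm α hα
  have key : ∑ α ∈ Φ, α (ν - νdom) = ∑ α ∈ Φ, (α ν - |α ν|) := by
    calc ∑ α ∈ Φ, α (ν - νdom) = ∑ α ∈ Φ, (α ν - α (w ν)) := by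
          rw [hνdom]; exact Finset.sum_congr rfl fun α _ => by rw [map_sub]
      _ = ∑ α ∈ Φ, α ν - ∑ α ∈ Φ, α (w ν) := Finset.sum_sub_distrib _ _
      _ = ∑ α ∈ Φ, α ν - ∑ α ∈ Φ, |α ν| := by rw [hsum]
      _ = ∑ α ∈ Φ, (α ν - |α ν|) := (Finset.sum_sub_distrib _ _).symm
  rw [key, Finset.sum_div]
  refine Finset.sum_congr rfl fun α _ => ?_
  rcases le_or_gt (α ν) 0 with h | h
  · rw [min_eq_left h, abs_of_nonpos h]; ring
  · rw [min_eq_right h.le, abs_of_pos h]; ring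
end

section
/- Let $\lambda = s/r \in \mathbb{Q}$ with $r \ge 1$, $\gcd(r,s)=1$, and suppose $s > 0$. Let $L = \bar{k}((\epsilon))$ with Frobenius $\sigma$, and define the $\sigma$-linear map $\Phi_\lambda$ on $L^r$ by $\Phi_\lambda(a_1,\dots,a_r) = (\epsilon^s \sigma(a_r), \sigma(a_1), \dots, \sigma(a_{r-1}))$. Then the $F$-linear map $f(v) = \Phi_\lambda(v) - v$ is bijective on $L^r$ and maps the lattice $\mathfrak{o}^r$ onto itself. -/
noncomputable def isocSol {K : Type*} [Field K] (q r s : ℕ) (hr : 0 < r) (hs : 0 < s)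
    (N : ℤ) (c : ℕ → ℤ → K) : ℤ → ℕ → K
  | n, 0 =>
    if _h : N ≤ n then (isocSol q r s hr hs N c (n - s) (r - 1)) ^ q - c 0 n else 0
  | n, i + 1 => (isocSol q r s hr hs N c n i) ^ q - c (i + 1) n
termination_by n i => (n - (N - s)).toNat * r + i
decreasing_by
  · have h1 : ((n : ℤ) - s - (N - s)).toNat = (n - N).toNat := by omega
    have h2 : (n - (N - s)).toNat = (n - N).toNat + s := by omega
    rw [h1, h2, Nat.add_mul]
    have h3 : r - 1 < s * r :=
      lt_of_lt_of_le (Nat.sub_lt hr one_pos) (Nat.le_mul_of_pos_left r hs)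
    exact Nat.add_lt_add_left h3 _
  · exact Nat.add_lt_add_left (Nat.lt_succ_self i) _

theorem isocSol_zero_of_le {K : Type*} [Field K] {q r s : ℕ} {hr : 0 < r} {hs : 0 < s}
    {N : ℤ} {c : ℕ → ℤ → K} {n : ℤ} (h : N ≤ n) :
    isocSol q r s hr hs N c n 0 = (isocSol q r s hr hs N c (n - s) (r - 1)) ^ q - c 0 n := by
  rw [isocSol, dif_pos h]

theorem isocSol_zero_of_lt {K : Type*} [Field K] {q r s : ℕ} {hr : 0 < r} {hs : 0 < s}
    {N : ℤ} {c : ℕ → ℤ → K} {n : ℤ} (h : n < N) :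
    isocSol q r s hr hs N c n 0 = 0 := by
  rw [isocSol, dif_neg (not_le.2 h)]

theorem isocSol_succ {K : Type*} [Field K] {q r s : ℕ} {hr : 0 < r} {hs : 0 < s}
    {N : ℤ} {c : ℕ → ℤ → K} {n : ℤ} {i : ℕ} :
    isocSol q r s hr hs N c n (i + 1) = (isocSol q r s hr hs N c n i) ^ q - c (i + 1) n := by
  rw [isocSol]

theorem isocSol_eq_zero {K : Type*} [Field K] {q r s : ℕ} {hr : 0 < r} {hs : 0 < s}
    {N : ℤ} {c : ℕ → ℤ → K} (hq : 0 < q) (hc : ∀ i n, n < N → c i n = 0) :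
    ∀ (i : ℕ) (n : ℤ), n < N → isocSol q r s hr hs N c n i = 0 := by
  intro i
  induction i with
  | zero => exact fun n hn => isocSol_zero_of_lt hn
  | succ i ih =>
    intro n hn
    rw [isocSol_succ, ih n hn, hc (i + 1) n hn, zero_pow hq.ne', sub_zero]

theorem fin_sub_one_val {r : ℕ} [NeZero r] (i : Fin r) :
    (i - 1).val = if i.val = 0 then r - 1 else i.val - 1 := by
  have hi := i.isLt
  rcases Nat.lt_or_ge r 2 with h1 | h2
  · have := (i - 1).isLt
    split_ifs <;> omega
  · rw [Fin.sub_def]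
    show (r - 1 % r + ↑i) % r = _
    rw [Nat.mod_eq_of_lt (by omega : 1 < r)]
    by_cases h0 : i.val = 0
    · rw [h0, if_pos rfl, Nat.add_zero, Nat.mod_eq_of_lt (by omega)]
    · have h : r - 1 + ↑i = (↑i - 1) + 1 * r := by omega
      rw [h, Nat.add_mul_mod_self_right, if_neg h0, Nat.mod_eq_of_lt (by omega)]

theorem isoc_key {K : Type*} [Field K] (q r s : ℕ) (hq : 0 < q) (hr : 0 < r) (hs : 0 < s)
    [NeZero r] (N : ℤ) (w : Fin r → LaurentSeries K)
    (hw : ∀ (i : Fin r) (n : ℤ), n < N → (w i).coeff n = 0) :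
    ∃ v : Fin r → LaurentSeries K,
      (∀ (i : Fin r) (n : ℤ), n < N → (v i).coeff n = 0) ∧
      (∀ n : ℤ, (v 0).coeff n = ((v (0 - 1)).coeff (n - s)) ^ q - (w 0).coeff n) ∧
      (∀ i : Fin r, i ≠ 0 → ∀ n : ℤ,
        (v i).coeff n = ((v (i - 1)).coeff n) ^ q - (w i).coeff n) := by
  set c : ℕ → ℤ → K := fun i n => (w ⟨i % r, Nat.mod_lt i hr⟩).coeff n with hc_def
  have hc : ∀ i n, n < N → c i n = 0 := fun i n hn => hw _ n hn
  have hz := isocSol_eq_zero (q := q) (r := r) (s := s) (hr := hr) (hs := hs)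
    (N := N) (c := c) hq hc
  have hWF : (Set.Ici N).IsWF := bddBelow_Ici.wellFoundedOn_lt
  have hIci : (Set.Ici N).IsPWO := hWF.isPWO
  let v : Fin r → LaurentSeries K := fun i =>
    { coeff := fun n => isocSol q r s hr hs N c n i.val
      isPWO_support' := hIci.mono fun n hn => not_lt.1 fun h => hn (hz _ n h) }
  have hvc : ∀ (i : Fin r) (n : ℤ), (v i).coeff n = isocSol q r s hr hs N c n i.val :=
    fun i n => rfl
  refine ⟨v, fun i n hn => by rw [hvc]; exact hz _ n hn, ?_, ?_⟩
  · intro n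
    have h01 : ((0 - 1 : Fin r)).val = r - 1 := by
      rw [fin_sub_one_val, Fin.val_zero, if_pos rfl]
    have e2 : c 0 n = (w 0).coeff n := by
      show (w ⟨0 % r, _⟩).coeff n = _
      congr 1
    rw [hvc, hvc, Fin.val_zero, h01, ← e2]
    rcases le_or_gt N n with h | h
    · exact isocSol_zero_of_le h
    · rw [isocSol_zero_of_lt h, hz _ _ (by omega : n - (s : ℤ) < N),
        hc 0 n h, zero_pow hq.ne', sub_zero]
  · intro i hi n
    have hival : i.val ≠ 0 := fun h => hi (Fin.ext (by simp [h]))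
    obtain ⟨k, hk⟩ : ∃ k, i.val = k + 1 := ⟨i.val - 1, by omega⟩
    have hsub : (i - 1).val = k := by rw [fin_sub_one_val, if_neg hival]; omega
    have e2 : c (k + 1) n = (w i).coeff n := by
      have hfin : (⟨(k + 1) % r, Nat.mod_lt _ hr⟩ : Fin r) = i :=
        Fin.ext (by show (k + 1) % r = i.val; rw [Nat.mod_eq_of_lt (hk ▸ i.isLt)]; omega)
      show (w ⟨(k + 1) % r, _⟩).coeff n = _
      rw [hfin]
    rw [hvc, hvc, hk, hsub, isocSol_succ, e2]

/-- For `λ = s/r` with `s > 0`, `gcd(r,s) = 1`, the map `f(v) = Φ_λ(v) - v` on `L^r`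
(where `L = K((ε))`, `K` algebraically closed with `q`-power Frobenius `σ`, and
`Φ_λ(a_1,…,a_r) = (ε^s σ(a_r), σ(a_1), …, σ(a_{r-1}))`) is bijective and maps the lattice
`𝔬^r` onto itself. -/
theorem simple_isocrystal_positive_slope_bijective
    (p q m : ℕ) (hp : p.Prime) (hq : q = p ^ m) (hm : 1 ≤ m)
    (K : Type*) [Field K] [IsAlgClosed K] [CharP K p]
    (σL : LaurentSeries K → LaurentSeries K)
    (hσL : ∀ (x : LaurentSeries K) (n : ℤ), (σL x).coeff n = (x.coeff n) ^ q)
    (r : ℕ) [NeZero r] (s : ℕ) (hs : 0 < s) (hrs : Nat.gcd r s = 1)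
    -- the simple F-space structure `Φ_λ` of slope `λ = s/r` on `L^r`
    (Φ : (Fin r → LaurentSeries K) → (Fin r → LaurentSeries K))
    (hΦ : ∀ v (i : Fin r), Φ v i =
      (if i = 0 then HahnSeries.single (s : ℤ) (1 : K) else 1) * σL (v (i - 1))) :
    Function.Bijective (fun v : Fin r → LaurentSeries K => Φ v - v) ∧
    (fun v : Fin r → LaurentSeries K => Φ v - v) ''
        {v | ∀ i, v i ∈ Set.range (HahnSeries.ofPowerSeries ℤ K)}
      = {v | ∀ i, v i ∈ Set.range (HahnSeries.ofPowerSeries ℤ K)} := by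
  subst hq
  haveI : Fact p.Prime := ⟨hp⟩
  have hr : 0 < r := NeZero.pos r
  have hq0 : 0 < p ^ m := pow_pos hp.pos m
  have hQ0 : (p ^ m) ^ r ≠ 0 := (pow_pos hq0 r).ne'
  -- coefficient formula for f = Φ - id
  have hsingle : ∀ (x : LaurentSeries K) (n : ℤ),
      ((HahnSeries.single (s : ℤ) (1 : K)) * x).coeff n = x.coeff (n - s) := by
    intro x n
    have h := HahnSeries.coeff_single_mul_add (r := (1 : K)) (x := x)
      (a := n - (s : ℤ)) (b := (s : ℤ))
    rw [sub_add_cancel] at h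
    rw [h, one_mul]
  have hcoeff : ∀ (v : Fin r → LaurentSeries K) (i : Fin r) (n : ℤ),
      ((Φ v - v) i).coeff n =
        (if i = 0 then ((v (i - 1)).coeff (n - s)) ^ (p ^ m)
          else ((v (i - 1)).coeff n) ^ (p ^ m)) - (v i).coeff n := by
    intro v i n
    rw [Pi.sub_apply, HahnSeries.coeff_sub, hΦ]
    by_cases h : i = 0
    · rw [if_pos h, if_pos h, hsingle, hσL]
    · rw [if_neg h, if_neg h, one_mul, hσL]
  -- existence of preimages with coefficient control
  have hexist : ∀ (N : ℤ) (w : Fin r → LaurentSeries K),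
      (∀ (i : Fin r) (n : ℤ), n < N → (w i).coeff n = 0) →
      ∃ v, (∀ (i : Fin r) (n : ℤ), n < N → (v i).coeff n = 0) ∧ Φ v - v = w := by
    intro N w hw
    obtain ⟨v, hv0, hveq0, hveqi⟩ := isoc_key (p ^ m) r s hq0 hr hs N w hw
    refine ⟨v, hv0, ?_⟩
    funext i
    ext n
    rw [hcoeff]
    by_cases h : i = 0
    · subst h; rw [if_pos rfl, hveq0 n]; ring
    · rw [if_neg h, hveqi i h n]; ring
  -- injectivity
  have hinj : Function.Injective (fun v : Fin r → LaurentSeries K => Φ v - v) := by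
    intro v v' hvv'
    simp only [] at hvv'
    have hd : ∀ (i : Fin r) (n : ℤ),
        (v i - v' i).coeff n =
          (if i = 0 then ((v (i - 1) - v' (i - 1)).coeff (n - s)) ^ (p ^ m)
            else ((v (i - 1) - v' (i - 1)).coeff n) ^ (p ^ m)) := by
      intro i n
      have h3 : ((Φ v - v) i).coeff n = ((Φ v' - v') i).coeff n := by rw [hvv']
      rw [hcoeff v i n, hcoeff v' i n] at h3
      rw [HahnSeries.coeff_sub]
      by_cases h : i = 0
      · simp only [if_pos h] at h3 ⊢
        rw [HahnSeries.coeff_sub, sub_pow_char_pow]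
        linear_combination -h3
      · simp only [if_neg h] at h3 ⊢
        rw [HahnSeries.coeff_sub, sub_pow_char_pow]
        linear_combination -h3
    have hstep : ∀ (k : ℕ) (hk : k < r) (n : ℤ),
        (v ⟨k, hk⟩ - v' ⟨k, hk⟩).coeff n = ((v 0 - v' 0).coeff n) ^ (p ^ m) ^ k := by
      intro k
      induction k with
      | zero =>
        intro hk n
        have h0 : (⟨0, hk⟩ : Fin r) = 0 := Fin.ext (by simp)
        rw [h0, pow_zero, pow_one]
      | succ k ih =>
        intro hk n
        have hlt : k < r := Nat.lt_of_succ_lt hk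
        have hne : (⟨k + 1, hk⟩ : Fin r) ≠ 0 := by
          simp [Fin.ext_iff]
        have hd1 := hd ⟨k + 1, hk⟩ n
        rw [if_neg hne] at hd1
        have hm1 : ((⟨k + 1, hk⟩ : Fin r) - 1) = ⟨k, hlt⟩ :=
          Fin.ext (by rw [fin_sub_one_val]; simp)
        rw [hm1] at hd1
        rw [hd1, ih hlt n, ← pow_mul, ← pow_succ]
    have hiter : ∀ n : ℤ,
        (v 0 - v' 0).coeff n = ((v 0 - v' 0).coeff (n - s)) ^ (p ^ m) ^ r := by
      intro n
      have hd0 := hd 0 n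
      rw [if_pos rfl] at hd0
      have hm1 : ((0 : Fin r) - 1) = ⟨r - 1, by omega⟩ :=
        Fin.ext (by rw [fin_sub_one_val, Fin.val_zero, if_pos rfl])
      rw [hm1] at hd0
      have hr1 : r - 1 + 1 = r := by omega
      rw [hd0, hstep (r - 1) (by omega) (n - s), ← pow_mul, ← pow_succ, hr1]
    have h0 : v 0 - v' 0 = 0 := by
      by_contra hne
      have h1 := mt HahnSeries.coeff_order_eq_zero.mp hne
      have hs' : (0 : ℤ) < (s : ℤ) := by exact_mod_cast hs
      have h2 : (v 0 - v' 0).coeff ((v 0 - v' 0).order - s) = 0 :=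
        HahnSeries.coeff_eq_zero_of_lt_order (by omega)
      exact h1 (by rw [hiter ((v 0 - v' 0).order), h2, zero_pow hQ0])
    funext i
    have hieq : (⟨i.val, i.isLt⟩ : Fin r) = i := Fin.ext rfl
    have hz : v i - v' i = 0 := by
      ext n
      rw [← hieq, hstep i.val i.isLt n, h0]
      simp [zero_pow (pow_pos hq0 i.val).ne']
    exact sub_eq_zero.mp hz
  -- surjectivity
  have hsurj : Function.Surjective (fun v : Fin r → LaurentSeries K => Φ v - v) := by
    intro w
    have hN : ∃ N : ℤ, ∀ (i : Fin r) (n : ℤ), n < N → (w i).coeff n = 0 := by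
      have h : ∀ i : Fin r, ∃ Ni : ℤ, ∀ n : ℤ, n < Ni → (w i).coeff n = 0 := by
        intro i
        by_cases hwi : w i = 0
        · exact ⟨0, fun n _ => by rw [hwi]; exact HahnSeries.coeff_zero⟩
        · exact ⟨(w i).order, fun n hn => HahnSeries.coeff_eq_zero_of_lt_order hn⟩
      choose g hg using h
      refine ⟨Finset.univ.inf' Finset.univ_nonempty g, fun i n hn => hg i n ?_⟩
      exact lt_of_lt_of_le hn (Finset.inf'_le g (Finset.mem_univ i))
    obtain ⟨N, hw⟩ := hN
    obtain ⟨v, _, hv⟩ := hexist N w hw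
    exact ⟨v, hv⟩
  -- membership in the lattice
  have hmem : ∀ x : LaurentSeries K,
      x ∈ Set.range (HahnSeries.ofPowerSeries ℤ K) ↔ ∀ n : ℤ, n < 0 → x.coeff n = 0 := by
    intro x
    constructor
    · rintro ⟨g, rfl⟩ n hn
      rw [HahnSeries.ofPowerSeries_apply]
      apply HahnSeries.embDomain_notin_range
      rintro ⟨k, hk⟩
      have hk' : (k : ℤ) = n := hk
      omega
    · intro h
      refine ⟨PowerSeries.mk fun k => x.coeff k, ?_⟩
      ext n
      rcases le_or_gt 0 n with hn | hn
      · obtain ⟨k, rfl⟩ := Int.eq_ofNat_of_zero_le hn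
        rw [HahnSeries.ofPowerSeries_apply_coeff, PowerSeries.coeff_mk]
      · rw [h n hn, HahnSeries.ofPowerSeries_apply]
        apply HahnSeries.embDomain_notin_range
        rintro ⟨k, hk⟩
        have hk' : (k : ℤ) = n := hk
        omega
  refine ⟨⟨hinj, hsurj⟩, ?_⟩
  apply Set.Subset.antisymm
  · rintro w ⟨v, hv, rfl⟩
    intro i
    rw [hmem]
    intro n hn
    have hvin : ∀ (j : Fin r) (nn : ℤ), nn < 0 → (v j).coeff nn = 0 :=
      fun j => (hmem (v j)).1 (hv j)
    show ((Φ v - v) i).coeff n = 0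
    rw [hcoeff v i n, hvin i n hn, sub_zero]
    by_cases h : i = 0
    · rw [if_pos h, hvin _ _ (by omega : n - (s : ℤ) < 0), zero_pow hq0.ne']
    · rw [if_neg h, hvin _ n hn, zero_pow hq0.ne']
  · intro w hw
    have hw' : ∀ (i : Fin r) (n : ℤ), n < 0 → (w i).coeff n = 0 :=
      fun i => (hmem (w i)).1 (hw i)
    obtain ⟨v, hv0, hveq⟩ := hexist 0 w hw'
    exact ⟨v, fun i => (hmem (v i)).2 fun n hn => hv0 i n hn, hveq⟩
end

section
/- Let $(V,\Phi)$ be an $F$-space over $L = \bar{k}((\epsilon))$ (a finite-dimensional $L$-vector space with a $\sigma$-linear bijection $\Phi$) that decomposes as a direct sum of simple $F$-spaces. Then the map $f: V \to V$ defined by $f(v) = \Phi(v) - v$ is surjective. -/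
/-- The standard simple `F`-space structure `Φ_{s/r}` of slope `s/r` on `L^r`:
`Φ(a_1,…,a_r) = (ε^s σ(a_r), σ(a_1), …, σ(a_{r-1}))`. -/
noncomputable def stdSimplePhi {K : Type*} [Field K] (σL : LaurentSeries K → LaurentSeries K)
    (r : ℕ) (s : ℤ) (v : Fin r → LaurentSeries K) : Fin r → LaurentSeries K := fun i =>
  if i.val = 0 then
    HahnSeries.single s (1 : K) * σL (v ⟨r - 1, by have := i.isLt; omega⟩)
  else σL (v ⟨i.val - 1, by have := i.isLt; omega⟩)

section Aux

variable {K : Type*} [Field K]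

open Polynomial in
/-- Artin–Schreier-type roots in an algebraically closed field. -/
lemma exists_AS_root [IsAlgClosed K] (Q : ℕ) (hQ : 2 ≤ Q) (a : K) :
    ∃ x : K, x ^ Q - x = a := by
  have hdeg : (X ^ Q - X - C a : K[X]).degree = Q := by
    have h1 : (X + C a : K[X]).degree < (X ^ Q : K[X]).degree := by
      rw [degree_X_add_C, degree_X_pow]
      exact_mod_cast (by omega : 1 < Q)
    have : (X ^ Q - X - C a : K[X]) = X ^ Q - (X + C a) := by ring
    rw [this, degree_sub_eq_left_of_degree_lt h1, degree_X_pow]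
  obtain ⟨x, hx⟩ := IsAlgClosed.exists_root (X ^ Q - X - C a : K[X]) (by
    rw [hdeg]; exact_mod_cast (by omega : Q ≠ 0))
  refine ⟨x, ?_⟩
  have := hx
  simp only [IsRoot, eval_sub, eval_pow, eval_X, eval_C] at this
  linear_combination this

/-- A choice of `Q`-th root. -/
noncomputable def rootQ [IsAlgClosed K] (Q : ℕ) (hQ : 0 < Q) (a : K) : K :=
  Classical.choose (IsAlgClosed.exists_pow_nat_eq a hQ)

lemma rootQ_pow [IsAlgClosed K] (Q : ℕ) (hQ : 0 < Q) (a : K) : rootQ Q hQ a ^ Q = a :=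
  Classical.choose_spec (IsAlgClosed.exists_pow_nat_eq a hQ)

/-- Recursive solution for positive twist. -/
noncomputable def recPos (Q : ℕ) (s N : ℤ) (hs : 0 < s) (c : ℤ → K) (n : ℤ) : K :=
  if h : n < N then 0 else (recPos Q s N hs c (n - s)) ^ Q - c n
termination_by (n - N + 1).toNat
decreasing_by simp_wf; omega

/-- Recursive solution for negative twist. -/
noncomputable def recNeg [IsAlgClosed K] (Q : ℕ) (hQ : 0 < Q) (t N : ℤ) (ht : 0 < t)
    (c : ℤ → K) (n : ℤ) : K :=
  if h : n < N + t then 0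
  else rootQ Q hQ (recNeg Q hQ t N ht c (n - t) + c (n - t))
termination_by (n - N).toNat
decreasing_by omega

/-- The scalar equation `ε^s τ(x) - x = c` is solvable in `K((ε))`. -/
lemma scalar_surj [IsAlgClosed K] (Q : ℕ) (hQ : 2 ≤ Q)
    (τ : LaurentSeries K → LaurentSeries K)
    (hτ : ∀ x n, (τ x).coeff n = x.coeff n ^ Q) (s : ℤ) (c : LaurentSeries K) :
    ∃ x : LaurentSeries K, HahnSeries.single s (1 : K) * τ x - x = c := by
  classical
  have hQ0 : 0 < Q := by omega
  have key : ∀ x : LaurentSeries K,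
      (∀ n, x.coeff (n - s) ^ Q - x.coeff n = c.coeff n) →
      HahnSeries.single s (1 : K) * τ x - x = c := by
    intro x hx
    ext n
    have h1 : ∀ a : ℤ, (HahnSeries.single s (1 : K) * τ x).coeff (a + s) = x.coeff a ^ Q := by
      intro a
      rw [HahnSeries.coeff_single_mul_add, one_mul, hτ]
    have h2 : (HahnSeries.single s (1 : K) * τ x).coeff n = x.coeff (n - s) ^ Q := by
      have := h1 (n - s); rwa [sub_add_cancel] at this
    rw [HahnSeries.coeff_sub, h2, hx n]
  set N : ℤ := c.order with hNdef
  have hN : ∀ n < N, c.coeff n = 0 := fun n hn => HahnSeries.coeff_eq_zero_of_lt_order hn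
  rcases lt_trichotomy s 0 with hs | hs | hs
  · -- s < 0
    set t : ℤ := -s with htdef
    have ht : 0 < t := by omega
    set f : ℤ → K := recNeg Q hQ0 t N ht c.coeff with hf
    have hzero : ∀ n, n < N + t → f n = 0 := by
      intro n hn; rw [hf, recNeg, dif_pos hn]
    have hrec : ∀ n, ¬ n < N + t → f n = rootQ Q hQ0 (f (n - t) + c.coeff (n - t)) := by
      intro n hn; rw [hf]; rw [recNeg, dif_neg hn]
    have hbdd : BddBelow (Function.support f) := by
      refine ⟨N + t, fun n hn => ?_⟩
      by_contra hc
      exact hn (hzero n (by omega))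
    refine ⟨HahnSeries.ofSuppBddBelow f hbdd, key _ ?_⟩
    intro n
    have hcoeff : ∀ a, (HahnSeries.ofSuppBddBelow f hbdd).coeff a = f a := fun a => rfl
    rw [hcoeff, hcoeff]
    have hns : n - s = n + t := by omega
    rw [hns]
    by_cases hn : n < N
    · rw [hzero n (by omega), hzero (n + t) (by omega), hN n hn, zero_pow (by omega), sub_zero]
    · have h := hrec (n + t) (by omega)
      have : (n + t) - t = n := by omega
      rw [this] at h
      rw [h, rootQ_pow, add_sub_cancel_left]
  · -- s = 0
    set f : ℤ → K := fun n => if c.coeff n = 0 then 0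
      else Classical.choose (exists_AS_root Q hQ (c.coeff n)) with hf
    have hsupp : Function.support f ⊆ Function.support c.coeff := by
      intro n hn
      simp only [Function.mem_support] at hn ⊢
      intro hc
      exact hn (by rw [hf]; simp [hc])
    refine ⟨⟨f, c.isPWO_support.mono hsupp⟩, key _ ?_⟩
    intro n
    show f (n - s) ^ Q - f n = c.coeff n
    rw [hs, sub_zero]
    by_cases hc : c.coeff n = 0
    · rw [hf]; simp [hc, zero_pow (by omega : Q ≠ 0)]
    · have : f n = Classical.choose (exists_AS_root Q hQ (c.coeff n)) := by
        rw [hf]; simp [hc]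
      rw [this]
      exact Classical.choose_spec (exists_AS_root Q hQ (c.coeff n))
  · -- 0 < s
    set f : ℤ → K := recPos Q s N hs c.coeff with hf
    have hzero : ∀ n, n < N → f n = 0 := by
      intro n hn; rw [hf, recPos, dif_pos hn]
    have hrec : ∀ n, ¬ n < N → f n = f (n - s) ^ Q - c.coeff n := by
      intro n hn; rw [hf]; rw [recPos, dif_neg hn]
    have hbdd : BddBelow (Function.support f) := by
      refine ⟨N, fun n hn => ?_⟩
      by_contra hc
      exact hn (hzero n (by omega))
    refine ⟨HahnSeries.ofSuppBddBelow f hbdd, key _ ?_⟩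
    intro n
    have hcoeff : ∀ a, (HahnSeries.ofSuppBddBelow f hbdd).coeff a = f a := fun a => rfl
    rw [hcoeff, hcoeff]
    by_cases hn : n < N
    · rw [hzero n hn, hzero (n - s) (by omega), hN n hn, zero_pow (by omega), sub_zero]
    · rw [hrec n hn, sub_sub_cancel]

/-- The auxiliary chain `u 0 = x`, `u (i+1) = σ(u i) - w' (i+1)`. -/
noncomputable def chain (σL : LaurentSeries K → LaurentSeries K)
    (w' : ℕ → LaurentSeries K) (x : LaurentSeries K) : ℕ → LaurentSeries K
  | 0 => x
  | (i + 1) => σL (chain σL w' x i) - w' (i + 1)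

lemma chain_eq (σL : LaurentSeries K →+* LaurentSeries K) (w' : ℕ → LaurentSeries K)
    (x : LaurentSeries K) : ∀ k, chain σL w' x k = σL^[k] x + chain σL w' 0 k := by
  intro k
  induction k with
  | zero => simp [chain]
  | succ k ih =>
      rw [chain, chain, ih, map_add, Function.iterate_succ_apply']
      ring

/-- Surjectivity of `Φ_{s/r} - id` on a simple block. -/
lemma block_surj {q : ℕ} [IsAlgClosed K] (hq : 2 ≤ q)
    (σL : LaurentSeries K →+* LaurentSeries K)
    (hσL : ∀ (x : LaurentSeries K) (n : ℤ), (σL x).coeff n = (x.coeff n) ^ q)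
    (r : ℕ) (hr : 0 < r) (s : ℤ) (w : Fin r → LaurentSeries K) :
    ∃ v : Fin r → LaurentSeries K, ∀ i, stdSimplePhi σL r s v i - v i = w i := by
  have hiter : ∀ (k : ℕ) (x : LaurentSeries K) (n : ℤ),
      (σL^[k] x).coeff n = x.coeff n ^ q ^ k := by
    intro k
    induction k with
    | zero => simp
    | succ k ih =>
        intro x n
        rw [Function.iterate_succ_apply', hσL, ih, ← pow_mul, pow_succ]
  set w' : ℕ → LaurentSeries K := fun i => if h : i < r then w ⟨i, h⟩ else 0 with hw'
  set t : ℕ → LaurentSeries K := chain σL w' 0 with htdef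
  have hQ : 2 ≤ q ^ r := le_trans hq (Nat.le_self_pow (by omega) q)
  obtain ⟨x, hx⟩ := scalar_surj (q ^ r) hQ (σL^[r]) (hiter r) s
    (w ⟨0, hr⟩ - HahnSeries.single s (1 : K) * σL (t (r - 1)))
  set u : ℕ → LaurentSeries K := chain σL w' x with hudef
  refine ⟨fun i => u i.val, ?_⟩
  intro i
  obtain ⟨iv, hlt⟩ := i
  match iv with
  | 0 =>
      show HahnSeries.single s (1 : K) * σL (u (r - 1)) - u 0 = w ⟨0, hlt⟩
      have hu0 : u 0 = x := rfl
      have hur : u (r - 1) = σL^[r - 1] x + t (r - 1) := chain_eq σL w' x (r - 1)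
      have hitereq : σL (σL^[r - 1] x) = σL^[r] x := by
        conv_rhs => rw [show r = (r - 1) + 1 by omega]
        rw [Function.iterate_succ_apply']
      rw [hu0, hur, map_add, hitereq, mul_add]
      have : HahnSeries.single s (1 : K) * σL^[r] x - x
          = w ⟨0, hlt⟩ - HahnSeries.single s (1 : K) * σL (t (r - 1)) := hx
      linear_combination this
  | (k + 1) =>
      show σL (u k) - u (k + 1) = w ⟨k + 1, hlt⟩
      have : u (k + 1) = σL (u k) - w' (k + 1) := rfl
      rw [this, sub_sub_cancel, hw']
      simp only [dif_pos hlt]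

end Aux

/-- If `(V, Φ)` is an `F`-space over `L = k̄((ε))` (a finite-dimensional `L`-vector space with a
`σ`-linear bijection `Φ`) which decomposes as a direct sum of simple `F`-spaces, then
`f(v) = Φ(v) - v` is surjective. -/
theorem fspace_phi_sub_id_surjective
    (p q m : ℕ) (hp : p.Prime) (hq : q = p ^ m) (hm : 1 ≤ m)
    (K : Type*) [Field K] [IsAlgClosed K] [CharP K p]
    (σL : LaurentSeries K →+* LaurentSeries K)
    (hσL : ∀ (x : LaurentSeries K) (n : ℤ), (σL x).coeff n = (x.coeff n) ^ q)
    (V : Type*) [AddCommGroup V] [Module (LaurentSeries K) V]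
    [FiniteDimensional (LaurentSeries K) V]
    (Φ : V → V) (hadd : ∀ v w, Φ (v + w) = Φ v + Φ w)
    (hsemilin : ∀ (c : LaurentSeries K) (v : V), Φ (c • v) = σL c • Φ v)
    (hbij : Function.Bijective Φ)
    -- `(V, Φ)` is a direct sum of simple F-spaces, the simple F-space of slope `s/r`
    -- being `(L^r, Φ_{s/r})`
    (hdecomp : ∃ (N : ℕ) (r : Fin N → ℕ) (s : Fin N → ℤ),
      (∀ j, 0 < r j ∧ Int.gcd (s j) (r j) = 1) ∧
      ∃ e : V ≃ₗ[LaurentSeries K] ((j : Fin N) → Fin (r j) → LaurentSeries K),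
        ∀ v j, e (Φ v) j = stdSimplePhi σL (r j) (s j) (fun i => e v j i)) :
    Function.Surjective (fun v : V => Φ v - v) := by
  obtain ⟨N, r, s, hrs, e, he⟩ := hdecomp
  have hq2 : 2 ≤ q := by
    rw [hq]
    calc 2 ≤ p := hp.two_le
    _ ≤ p ^ m := Nat.le_self_pow (by omega) p
  intro w
  have hblock : ∀ j, ∃ u : Fin (r j) → LaurentSeries K,
      ∀ i, stdSimplePhi σL (r j) (s j) u i - u i = e w j i :=
    fun j => block_surj hq2 σL hσL (r j) (hrs j).1 (s j) (fun i => e w j i)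
  choose u hu using hblock
  refine ⟨e.symm u, ?_⟩
  apply e.injective
  rw [map_sub]
  funext j
  have hev : e (e.symm u) = u := e.apply_symm_apply u
  have h1 : e (Φ (e.symm u)) j = stdSimplePhi σL (r j) (s j) (fun i => e (e.symm u) j i) :=
    he (e.symm u) j
  rw [hev] at h1 ⊢
  funext i
  show e (Φ (e.symm u)) j i - u j i = e w j i
  rw [h1]
  exact hu j i
end
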